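/- Locality of the X-type stabilizers: for every natural number k ≥ 1, every row of the matrix H_X = H_{L_k} ⊗ I_{3k} over 𝔽₂ has Hamming weight exactly k (each X-type stabilizer generator of QL_k acts nontrivially on exactly k qubits). -/

import Mathlib

open Matrix Kronecker

/-- The k×k matrix over 𝔽₂ with 0 on the diagonal and 1 off the diagonal. -/
def Gmat (k : ℕ) : Matrix (Fin k) (Fin k) (ZMod 2) :=
  fun i j => if i = j then 0 else 1

/-- Generator matrix of the code `L_k`: the block matrix `[I_k | G_k]`. -/
def GLk (k : ℕ) : Matrix (Fin k) (Fin k ⊕ Fin k) (ZMod 2) :=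
  Matrix.fromCols 1 (Gmat k)

/-- Parity-check matrix of the code `L_k`: the block matrix `[G_k | I_k]`. -/
def HLk (k : ℕ) : Matrix (Fin k) (Fin k ⊕ Fin k) (ZMod 2) :=
  Matrix.fromCols (Gmat k) 1

/-- Parity-check matrix of the code `L_k^+`:
the block matrix `[[G_k, I_k, 0_k], [I_k, 0_k, I_k]]`. -/
def HLkp (k : ℕ) : Matrix (Fin k ⊕ Fin k) (Fin k ⊕ Fin k ⊕ Fin k) (ZMod 2) :=
  Matrix.fromRows
    (Matrix.fromCols (Gmat k) (Matrix.fromCols 1 0))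
    (Matrix.fromCols 1 (Matrix.fromCols 0 1))

/-- The X-type stabilizer matrix of the quantum code `QL_k`: `H_X = H_{L_k} ⊗ I_{3k}`,
a `3k² × 6k²` matrix over 𝔽₂ (the `3k`-element index set is `Fin k ⊕ Fin k ⊕ Fin k`). -/
def HXq (k : ℕ) :
    Matrix (Fin k × (Fin k ⊕ Fin k ⊕ Fin k))
      ((Fin k ⊕ Fin k) × (Fin k ⊕ Fin k ⊕ Fin k)) (ZMod 2) :=
  HLk k ⊗ₖ (1 : Matrix (Fin k ⊕ Fin k ⊕ Fin k) (Fin k ⊕ Fin k ⊕ Fin k) (ZMod 2))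

/-- The Z-type stabilizer matrix of the quantum code `QL_k`: `H_Z = G_{L_k} ⊗ H_{L_k^+}`,
a `2k² × 6k²` matrix over 𝔽₂. -/
def HZq (k : ℕ) :
    Matrix (Fin k × (Fin k ⊕ Fin k))
      ((Fin k ⊕ Fin k) × (Fin k ⊕ Fin k ⊕ Fin k)) (ZMod 2) :=
  GLk k ⊗ₖ HLkp k

/-- Hamming weight: the number of nonzero coordinates of a vector. -/
def wt {n : Type*} [Fintype n] (v : n → ZMod 2) : ℕ :=
  (Finset.univ.filter fun j => v j ≠ 0).card

/-! The support of a row of `A ⊗ₖ I` is the support of the corresponding row of `A` times a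
singleton, and a row of `[G_k | I_k]` has `(k - 1) + 1` nonzero entries. -/

section HammingWeight

variable {m n p q : Type*} [Fintype n] [Fintype q]

theorem wt_sumElim [Fintype m] (u : m → ZMod 2) (v : n → ZMod 2) :
    wt (Sum.elim u v) = wt u + wt v := by
  have hsupp : (Finset.univ.filter fun j => Sum.elim u v j ≠ 0) =
      (Finset.univ.filter fun j => u j ≠ 0).disjSum (Finset.univ.filter fun j => v j ≠ 0) := by
    ext (j | j) <;> simp
  rw [wt, hsupp, Finset.card_disjSum, wt, wt]

theorem wt_fromCols_row [Fintype m] (A : Matrix p m (ZMod 2)) (B : Matrix p n (ZMod 2)) (i : p) :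
    wt (Matrix.fromCols A B i) = wt (A i) + wt (B i) :=
  wt_sumElim (A i) (B i)

theorem wt_kronecker_row (A : Matrix m n (ZMod 2)) (B : Matrix p q (ZMod 2)) (i : m) (j : p) :
    wt ((A ⊗ₖ B) (i, j)) = wt (A i) * wt (B j) := by
  have hsupp : (Finset.univ.filter fun c => (A ⊗ₖ B) (i, j) c ≠ 0) =
      (Finset.univ.filter fun a => A i a ≠ 0) ×ˢ (Finset.univ.filter fun b => B j b ≠ 0) := by
    ext ⟨a, b⟩
    simp [Matrix.kroneckerMap_apply]
  rw [wt, hsupp, Finset.card_product, wt, wt]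

theorem wt_one_row [DecidableEq n] (j : n) : wt ((1 : Matrix n n (ZMod 2)) j) = 1 := by
  have hsupp : (Finset.univ.filter fun c => (1 : Matrix n n (ZMod 2)) j c ≠ 0) = {j} := by
    ext c
    simp [Matrix.one_apply, eq_comm]
  rw [wt, hsupp, Finset.card_singleton]

end HammingWeight

theorem wt_Gmat_row {k : ℕ} (r : Fin k) : wt (Gmat k r) = k - 1 := by
  have hsupp : (Finset.univ.filter fun c => Gmat k r c ≠ 0) = Finset.univ.erase r := by
    ext c
    simp [Gmat, eq_comm]
  rw [wt, hsupp, Finset.card_erase_of_mem (Finset.mem_univ r), Finset.card_univ, Fintype.card_fin]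

theorem wt_HLk_row {k : ℕ} (r : Fin k) : wt (HLk k r) = k := by
  rw [HLk, wt_fromCols_row, wt_Gmat_row, wt_one_row]
  exact Nat.sub_add_cancel r.pos

theorem row_weight_HXq_general (k : ℕ)
    (i : Fin k × (Fin k ⊕ Fin k ⊕ Fin k)) :
    wt (HXq k i) = k := by
  rw [HXq, wt_kronecker_row, wt_HLk_row, wt_one_row, mul_one]

/-- Locality of the X-type stabilizers: every row of `H_X = H_{L_k} ⊗ I_{3k}` has
Hamming weight exactly `k`. -/
theorem row_weight_HXq (k : ℕ) (hk : 1 ≤ k)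
    (i : Fin k × (Fin k ⊕ Fin k ⊕ Fin k)) :
    wt (HXq k i) = k :=
  row_weight_HXq_general k i
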